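/- For all integers n with u_n ≠ 0 and n ∉ {-1, 0}, v_{-n} = (u_{2n} v_n - u_{3n}) / (t^n u_n). -/

import Mathlib

/-!
Let `M` be the companion matrix of `X³ - r X² - s X - t`; it is invertible since `det M = t ≠ 0`.
The sequences `k ↦ (M ^ k) 1 0` and `k ↦ tr (M ^ k)`, `k ∈ ℤ`, satisfy the recurrence and have the
initial values of `u` and `v`, so they are `u` and `v`. For `A = M ^ n`, the `(1, 0)` entry of the
Cayley–Hamilton identity `A³ = tr A • A² - tr (adj A) • A + det A • 1`, together with
`adj A = det A • A⁻¹ = t ^ n • M ^ (-n)`, reads `u (3n) = v n * u (2n) - t ^ n * v (-n) * u n`.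
-/

def SatisfiesRec3 {R M : Type*} [Semiring R] [AddCommMonoid M] [Module R M] (r s t : R)
    (w : ℤ → M) : Prop :=
  ∀ n : ℤ, w n = r • w (n - 1) + s • w (n - 2) + t • w (n - 3)

namespace SatisfiesRec3

variable {R M N : Type*} [Semiring R] {r s t : R}

theorem map [AddCommMonoid M] [Module R M] [AddCommMonoid N] [Module R N] {w : ℤ → M}
    (h : SatisfiesRec3 r s t w) (L : M →ₗ[R] N) : SatisfiesRec3 r s t (fun n => L (w n)) :=
  fun n => by simp only [h n, map_add, map_smul]

variable [AddCommGroup M] [Module R M]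

theorem sub {w₁ w₂ : ℤ → M} (h₁ : SatisfiesRec3 r s t w₁) (h₂ : SatisfiesRec3 r s t w₂) :
    SatisfiesRec3 r s t (w₁ - w₂) := fun n => by
  simp only [Pi.sub_apply, h₁ n, h₂ n, smul_sub]
  abel

theorem eq_zero {w : ℤ → M} (h : SatisfiesRec3 r s t w) (ht : IsSMulRegular M t)
    (h0 : w 0 = 0) (h1 : w 1 = 0) (h2 : w 2 = 0) : w = 0 := by
  have key : ∀ m : ℤ, w m = 0 ∧ w (m + 1) = 0 ∧ w (m + 2) = 0 := by
    intro m
    induction m using Int.induction_on with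
    | zero => exact ⟨h0, h1, h2⟩
    | succ k ih =>
      obtain ⟨hk, hk1, hk2⟩ := ih
      have h3 := h (k + 3)
      simp only [show (k : ℤ) + 3 - 1 = k + 2 by ring, show (k : ℤ) + 3 - 2 = k + 1 by ring,
        add_sub_cancel_right, hk, hk1, hk2, smul_zero, add_zero] at h3
      refine ⟨hk1, ?_, ?_⟩
      · rwa [add_assoc]
      · rwa [add_assoc, show (1 : ℤ) + 2 = 3 by norm_num]
    | pred k ih =>
      obtain ⟨hk, hk1, hk2⟩ := ih
      have h2' := h (-k + 2)
      simp only [show -(k : ℤ) + 2 - 1 = -k + 1 by ring, show -(k : ℤ) + 2 - 2 = -k by ring,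
        show -(k : ℤ) + 2 - 3 = -k - 1 by ring, hk, hk1, hk2, smul_zero, zero_add] at h2'
      refine ⟨ht (show t • w (-k - 1) = t • 0 by rw [← h2', smul_zero]), ?_, ?_⟩
      · rwa [sub_add_cancel]
      · rwa [show -(k : ℤ) - 1 + 2 = -k + 1 by ring]
  funext m
  exact (key m).1

theorem ext {w₁ w₂ : ℤ → M} (h₁ : SatisfiesRec3 r s t w₁) (h₂ : SatisfiesRec3 r s t w₂)
    (ht : IsSMulRegular M t) (h0 : w₁ 0 = w₂ 0) (h1 : w₁ 1 = w₂ 1) (h2 : w₁ 2 = w₂ 2) :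
    w₁ = w₂ :=
  sub_eq_zero.mp <| (h₁.sub h₂).eq_zero ht (sub_eq_zero.mpr h0) (sub_eq_zero.mpr h1)
    (sub_eq_zero.mpr h2)

end SatisfiesRec3

namespace Matrix

variable {n : Type*} [Fintype n] [DecidableEq n]

theorem det_zpow {K : Type*} [Field K] (A : Matrix n n K) (k : ℤ) :
    (A ^ k).det = A.det ^ k := by
  obtain ⟨m, rfl | rfl⟩ := Int.eq_nat_or_neg k
  · rw [zpow_natCast, zpow_natCast, det_pow]
  · rw [zpow_neg_natCast, det_nonsing_inv, det_pow, Ring.inverse_eq_inv', _root_.zpow_neg,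
      zpow_natCast]

theorem adjugate_eq_det_smul_inv {R : Type*} [CommRing R] {A : Matrix n n R}
    (h : IsUnit A.det) : A.adjugate = A.det • A⁻¹ := by
  rw [inv_def, smul_smul, Ring.mul_inverse_cancel _ h, one_smul]

theorem adjugate_zpow {K : Type*} [Field K] {A : Matrix n n K} (h : A.det ≠ 0) (k : ℤ) :
    (A ^ k).adjugate = A.det ^ k • A ^ (-k) := by
  rw [adjugate_eq_det_smul_inv ((isUnit_iff_ne_zero.mpr h).det_zpow k), det_zpow,
    zpow_neg (isUnit_iff_ne_zero.mpr h)]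

theorem pow_three_fin_three {R : Type*} [CommRing R] (A : Matrix (Fin 3) (Fin 3) R) :
    A ^ 3 = A.trace • A ^ 2 - A.adjugate.trace • A + A.det • 1 := by
  ext i j
  fin_cases i <;> fin_cases j <;>
    simp [pow_succ, mul_apply, Fin.sum_univ_succ, trace_fin_three, adjugate_fin_three,
      det_fin_three] <;> ring

theorem zpow_satisfiesRec3 {R : Type*} [CommRing R] {A : Matrix n n R} (hA : IsUnit A.det)
    {r s t : R} (h : A ^ 3 = r • A ^ 2 + s • A + t • 1) :
    SatisfiesRec3 r s t (fun k : ℤ => A ^ k) := fun k => by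
  obtain ⟨m, rfl⟩ : ∃ m, k = m + 3 := ⟨k - 3, by ring⟩
  have hpow (j : ℕ) : A ^ (m + j) = A ^ m * A ^ j := by rw [zpow_add hA, zpow_natCast]
  dsimp only
  rw [show m + 3 - 1 = m + (2 : ℕ) by push_cast; ring,
    show m + 3 - 2 = m + (1 : ℕ) by push_cast; ring, add_sub_cancel_right,
    show m + 3 = m + (3 : ℕ) by push_cast; ring, hpow, hpow, hpow, h, pow_one, mul_add, mul_add,
    mul_smul_comm, mul_smul_comm, mul_smul_comm, mul_one]

theorem det_zpow_mul_trace_zpow_neg_mul_apply {K : Type*} [Field K]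
    {A : Matrix (Fin 3) (Fin 3) K} (hA : A.det ≠ 0) (k : ℤ) {i j : Fin 3} (hij : i ≠ j) :
    A.det ^ k * (A ^ (-k)).trace * (A ^ k) i j =
      (A ^ (2 * k)) i j * (A ^ k).trace - (A ^ (3 * k)) i j := by
  have hCH := congrFun (congrFun (pow_three_fin_three (A ^ k)) i) j
  rw [← zpow_ofNat, ← zpow_ofNat, ← zpow_mul' A (isUnit_iff_ne_zero.mpr hA),
    ← zpow_mul' A (isUnit_iff_ne_zero.mpr hA), adjugate_zpow hA, det_zpow] at hCH
  simp only [sub_apply, add_apply, smul_apply, smul_eq_mul, one_apply_ne hij, mul_zero, add_zero,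
    trace_smul] at hCH
  linear_combination hCH

def companion3 {R : Type*} [Zero R] [One R] (r s t : R) : Matrix (Fin 3) (Fin 3) R :=
  !![r, s, t; 1, 0, 0; 0, 1, 0]

section companion3

variable {R : Type*} [CommRing R] (r s t : R)

@[simp] theorem det_companion3 : (companion3 r s t).det = t := by
  simp [companion3, det_fin_three]

@[simp] theorem trace_companion3 : (companion3 r s t).trace = r := by
  simp [companion3, trace_fin_three]

@[simp] theorem trace_companion3_sq : ((companion3 r s t) ^ 2).trace = r ^ 2 + 2 * s := by
  simp [companion3, trace_fin_three, sq]
  ring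

@[simp] theorem companion3_apply_one_zero : companion3 r s t 1 0 = 1 := rfl

@[simp] theorem companion3_sq_apply_one_zero : ((companion3 r s t) ^ 2) 1 0 = r := by
  simp [companion3, sq, mul_apply, Fin.sum_univ_succ]

theorem companion3_pow_three :
    companion3 r s t ^ 3 = r • companion3 r s t ^ 2 + s • companion3 r s t + t • 1 := by
  ext i j
  fin_cases i <;> fin_cases j <;>
    simp [companion3, pow_succ, mul_apply, Fin.sum_univ_succ] <;> ring

end companion3

end Matrix

open Matrix

theorem stmt_17 (r s t : ℂ) (ht : t ≠ 0)
    (u v : ℤ → ℂ)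
    (hu : ∀ n : ℤ, u n = r * u (n-1) + s * u (n-2) + t * u (n-3))
    (hu0 : u 0 = 0) (hu1 : u 1 = 1) (hu2 : u 2 = r)
    (hv : ∀ n : ℤ, v n = r * v (n-1) + s * v (n-2) + t * v (n-3))
    (hv0 : v 0 = 3) (hv1 : v 1 = r) (hv2 : v 2 = r ^ 2 + 2 * s) :
    ∀ n : ℤ, n ≠ -1 → n ≠ 0 → u n ≠ 0 →
      v (-n) = (u (2 * n) * v n - u (3 * n)) / (t ^ n * u n) := by
  intro n _ _ hun
  set A := companion3 r s t
  have hdet : A.det ≠ 0 := by simpa [A] using ht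
  have hA := zpow_satisfiesRec3 (isUnit_iff_ne_zero.mpr hdet) (companion3_pow_three r s t)
  have ht' : IsSMulRegular ℂ t := ht.isUnit.isSMulRegular ℂ
  have hAu : (fun k : ℤ => (A ^ k) 1 0) = u :=
    (hA.map (entryLinearMap ℂ ℂ (1 : Fin 3) (0 : Fin 3))).ext hu ht' (by simp [hu0])
      (by simp [A, hu1]) (by simp [A, hu2])
  have hAv : (fun k : ℤ => (A ^ k).trace) = v :=
    (hA.map (traceLinearMap (Fin 3) ℂ ℂ)).ext hv ht' (by simp [hv0]) (by simp [A, hv1])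
      (by simp [A, hv2])
  have key := det_zpow_mul_trace_zpow_neg_mul_apply hdet n (i := 1) (j := 0) (by decide)
  simp only [congrFun hAu, congrFun hAv, A, det_companion3] at key
  rw [eq_div_iff (mul_ne_zero (zpow_ne_zero n ht) hun)]
  linear_combination key
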